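/- Let R be a non-reduced commutative ring with identity. If there exist annihilating-ideals I and J of R such that Ann(I + J) = (0), then there exist distinct nonzero annihilating-ideals A and B of R with AB ≠ (0) and such that there is no nonzero ideal C with CA = CB = (0); in particular the annihilating-ideal graph of R has diameter 3. -/

import Mathlib

/-!
If `I * J ≠ 0`, the pair `I, J` itself is at distance 3, since an ideal killing both kills
`I + J`. If `I * J = 0`, pick a nonzero ideal `N` with `N² = 0`; as `Ann(I + J) = 0`, `N` does not
kill both `I` and `J`, say `N * I ≠ 0`. Then `I` and `J + N` work: the nonzero ideal `N * I`
kills `J + N` because `I * J = 0` and `N² = 0`, while `I * (J + N) ⊇ I * N ≠ 0`.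
-/

open Submodule

section

variable {R : Type*} [CommRing R]

/-- `A` and `B` are vertices of the annihilating-ideal graph `AG(R)` at distance `3`. -/
def AGDistThree (A B : Ideal R) : Prop :=
  A ≠ ⊥ ∧ B ≠ ⊥ ∧ A ≠ B ∧ annihilator A ≠ ⊥ ∧ annihilator B ≠ ⊥ ∧
    A * B ≠ ⊥ ∧ ¬ ∃ C : Ideal R, C ≠ ⊥ ∧ C * A = ⊥ ∧ C * B = ⊥

theorem exists_ideal_ne_bot_mul_self_eq_bot (hred : ¬ IsReduced R) :
    ∃ N : Ideal R, N ≠ ⊥ ∧ N * N = ⊥ := by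
  obtain ⟨x, hx2, hx0⟩ : ∃ x : R, x ^ 2 = 0 ∧ x ≠ 0 := by
    simpa [isReduced_iff_pow_one_lt 2 one_lt_two] using hred
  refine ⟨Ideal.span {x}, by simpa using hx0, ?_⟩
  rw [Ideal.span_singleton_mul_span_singleton, ← sq, hx2, Ideal.span_singleton_eq_bot]

theorem Ideal.le_annihilator_iff_mul_eq_bot {C D : Ideal R} : C ≤ annihilator D ↔ C * D = ⊥ :=
  le_annihilator_iff

theorem Ideal.eq_bot_of_mul_eq_bot_of_annihilator_sup_eq_bot {A B C : Ideal R}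
    (hAB : annihilator (A ⊔ B) = ⊥) (hCA : C * A = ⊥) (hCB : C * B = ⊥) : C = ⊥ := by
  rw [eq_bot_iff, ← hAB, annihilator_sup, le_inf_iff, Ideal.le_annihilator_iff_mul_eq_bot,
    Ideal.le_annihilator_iff_mul_eq_bot]
  exact ⟨hCA, hCB⟩

theorem agDistThree_of_annihilator_sup_eq_bot {A B : Ideal R} (hA : annihilator A ≠ ⊥)
    (hB : annihilator B ≠ ⊥) (hAB : annihilator (A ⊔ B) = ⊥) (hmul : A * B ≠ ⊥) :
    AGDistThree A B := by
  refine ⟨?_, ?_, ?_, hA, hB, hmul, ?_⟩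
  · rintro rfl
    exact hB (by simpa using hAB)
  · rintro rfl
    exact hA (by simpa using hAB)
  · rintro rfl
    exact hA (by simpa using hAB)
  · rintro ⟨C, hC, hCA, hCB⟩
    exact hC (Ideal.eq_bot_of_mul_eq_bot_of_annihilator_sup_eq_bot hAB hCA hCB)

theorem agDistThree_sup_of_mul_eq_bot {I J N : Ideal R} (hI : annihilator I ≠ ⊥)
    (hIJ : I * J = ⊥) (hann : annihilator (I ⊔ J) = ⊥) (hN : N * N = ⊥) (hNI : N * I ≠ ⊥) :
    AGDistThree I (J ⊔ N) := by
  have hNI_le : N * I ≤ annihilator (J ⊔ N) := by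
    rw [Ideal.le_annihilator_iff_mul_eq_bot, Ideal.mul_sup, mul_assoc, hIJ, mul_right_comm, hN]
    simp
  refine agDistThree_of_annihilator_sup_eq_bot hI (ne_bot_of_le_ne_bot hNI hNI_le) ?_ ?_
  · rw [eq_bot_iff, ← hann, ← sup_assoc]
    exact annihilator_mono le_sup_left
  · rw [mul_comm] at hNI
    exact ne_bot_of_le_ne_bot hNI (Ideal.mul_mono_right le_sup_right)

end

theorem diam_three_of_nonreduced {R : Type*} [CommRing R] (hred : ¬ IsReduced R)
    (h : ∃ I J : Ideal R, Submodule.annihilator I ≠ ⊥ ∧ Submodule.annihilator J ≠ ⊥ ∧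
      Submodule.annihilator (I + J) = ⊥) :
    ∃ A B : Ideal R, A ≠ ⊥ ∧ B ≠ ⊥ ∧ A ≠ B ∧
      Submodule.annihilator A ≠ ⊥ ∧ Submodule.annihilator B ≠ ⊥ ∧
      A * B ≠ ⊥ ∧ ¬ ∃ C : Ideal R, C ≠ ⊥ ∧ C * A = ⊥ ∧ C * B = ⊥ := by
  obtain ⟨I, J, hI, hJ, hann⟩ := h
  rw [Submodule.add_eq_sup] at hann
  by_cases hIJ : I * J = ⊥
  · obtain ⟨N, hN0, hN⟩ := exists_ideal_ne_bot_mul_self_eq_bot hred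
    by_cases hNI : N * I = ⊥
    · have hNJ : N * J ≠ ⊥ := fun hNJ =>
        hN0 (Ideal.eq_bot_of_mul_eq_bot_of_annihilator_sup_eq_bot hann hNI hNJ)
      rw [mul_comm] at hIJ
      rw [sup_comm] at hann
      exact ⟨J, I ⊔ N, agDistThree_sup_of_mul_eq_bot hJ hIJ hann hN hNJ⟩
    · exact ⟨I, J ⊔ N, agDistThree_sup_of_mul_eq_bot hI hIJ hann hN hNI⟩
  · exact ⟨I, J, agDistThree_of_annihilator_sup_eq_bot hI hJ hann hIJ⟩
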